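/- arXiv:2511.12698 — 2 statements merged into one kernel-verified Lean document; each statement's English description precedes it below -/
import Mathlib

section
/- Under the hold-out evaluation setup with symmetrically distributed, homoskedastic errors (σ_j² = σ² for all j), the variance of the centered hold-out loss equals (4σ²/m) times its expectation: Var(L) = (4σ²/m) · E[L]. (This is the variance-curve formula V(m) = 4σ² E_L(m)/m used to determine the optimal hold-out size.) -/
/-!
Expanding the square, `(a_j - ε_j)² - ε_j² = a_j² - 2 a_j ε_j` is affine in `ε_j`, so the centered
loss is the constant `(1/m) ∑ a_j²` plus the centered sum `∑ (-2 a_j / m) ε_j`. Its mean is that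
constant, and by independence its variance is `∑ (2 a_j / m)² σ² = (4σ²/m) · (1/m) ∑ a_j²`.
-/

open MeasureTheory ProbabilityTheory Finset

lemma mul_sum_sub_sq_sub_sq {ι : Type*} (s : Finset ι) (t : ℝ) (a e : ι → ℝ) :
    t * ∑ j ∈ s, ((a j - e j) ^ 2 - e j ^ 2)
      = ∑ j ∈ s, -2 * t * a j * e j + t * ∑ j ∈ s, a j ^ 2 := by
  rw [mul_sum, mul_sum, ← sum_add_distrib]
  exact sum_congr rfl fun j _ => by ring

section LinearCombination

variable {Ω ι : Type*} [MeasurableSpace Ω] {μ : Measure Ω} [Fintype ι] {X : ι → Ω → ℝ}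

lemma integral_fun_sum_const_mul_eq_zero (hX : ∀ i, Integrable (X i) μ)
    (hmean : ∀ i, ∫ ω, X i ω ∂μ = 0) (c : ι → ℝ) :
    ∫ ω, ∑ i, c i * X i ω ∂μ = 0 := by
  rw [integral_finsetSum _ fun i _ => (hX i).const_mul (c i)]
  simp [integral_const_mul, hmean]

lemma ProbabilityTheory.iIndepFun.variance_fun_sum_const_mul (hindep : iIndepFun X μ)
    (hX : ∀ i, MemLp (X i) 2 μ) (c : ι → ℝ) :
    Var[fun ω => ∑ i, c i * X i ω; μ] = ∑ i, c i ^ 2 * Var[X i; μ] := by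
  have hsum := IndepFun.variance_sum (μ := μ) (X := fun i ω => c i * X i ω) (s := univ)
    (fun i _ => (hX i).const_mul (c i))
    (fun i _ j _ hij =>
      (hindep.indepFun hij).comp (measurable_const_mul (c i)) (measurable_const_mul (c j)))
  simpa [sum_fn, variance_const_mul] using hsum

end LinearCombination

theorem holdout_variance_curve_general
    {Ω : Type*} [MeasurableSpace Ω] {P : Measure Ω} [IsProbabilityMeasure P]
    (m : ℕ) (a : Fin m → ℝ) (ε : Fin m → Ω → ℝ) (σ : ℝ)
    (hindep : iIndepFun ε P)
    (hL2 : ∀ j, MemLp (ε j) 2 P)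
    (hmean : ∀ j, ∫ ω, ε j ω ∂P = 0)
    (hvar : ∀ j, ∫ ω, (ε j ω) ^ 2 ∂P = σ ^ 2) :
    variance (fun ω => (1 / m : ℝ) * ∑ j, ((a j - ε j ω) ^ 2 - (ε j ω) ^ 2)) P
      = (4 * σ ^ 2 / m) *
        ∫ ω, (1 / m : ℝ) * ∑ j, ((a j - ε j ω) ^ 2 - (ε j ω) ^ 2) ∂P := by
  set c : Fin m → ℝ := fun j => -2 * (1 / m : ℝ) * a j
  have hvar_eq : ∀ j, Var[ε j; P] = σ ^ 2 := fun j => by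
    rw [variance_of_integral_eq_zero (hL2 j).aemeasurable (hmean j), hvar j]
  have hsum : MemLp (fun ω => ∑ j, c j * ε j ω) 2 P :=
    memLp_finsetSum _ fun j _ => (hL2 j).const_mul (c j)
  simp_rw [mul_sum_sub_sq_sub_sq]
  rw [variance_add_const hsum.aestronglyMeasurable,
    integral_add (hsum.integrable one_le_two) (integrable_const _),
    integral_fun_sum_const_mul_eq_zero (fun j => (hL2 j).integrable one_le_two) hmean,
    hindep.variance_fun_sum_const_mul hL2, integral_const]
  simp only [hvar_eq, c, probReal_univ, smul_eq_mul, one_mul, zero_add, mul_sum]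
  exact sum_congr rfl fun j _ => by ring

/-- Variance-curve formula: under symmetric homoskedastic errors,
`Var(L) = (4σ²/m) · E[L]`. -/
theorem holdout_variance_curve
    {Ω : Type*} [MeasurableSpace Ω] {P : Measure Ω} [IsProbabilityMeasure P]
    (m : ℕ) (hm : 0 < m) (a : Fin m → ℝ) (ε : Fin m → Ω → ℝ) (σ : ℝ)
    (hmeas : ∀ j, Measurable (ε j))
    (hindep : iIndepFun ε P)
    (hL2 : ∀ j, MemLp (ε j) 2 P)
    (hmean : ∀ j, ∫ ω, ε j ω ∂P = 0)
    (hvar : ∀ j, ∫ ω, (ε j ω) ^ 2 ∂P = σ ^ 2)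
    (hsymm : ∀ j, Measure.map (ε j) P = Measure.map (fun ω => -(ε j ω)) P) :
    variance (fun ω => (1 / m : ℝ) * ∑ j, ((a j - ε j ω) ^ 2 - (ε j ω) ^ 2)) P
      = (4 * σ ^ 2 / m) *
        ∫ ω, (1 / m : ℝ) * ∑ j, ((a j - ε j ω) ^ 2 - (ε j ω) ^ 2) ∂P :=
  holdout_variance_curve_general m a ε σ hindep hL2 hmean hvar
end

section
/- (Stein's identity used to derive SURE.) Let N ≥ 1, let ε_1, …, ε_N be i.i.d. Gaussian N(0, σ²) random variables, write Y = μ + ε for a fixed μ ∈ ℝ^N, and let μ̂ : ℝ^N → ℝ^N be continuously differentiable with E[|ε_i μ̂_i(Y)|] < ∞ and E[|(∂μ̂_i/∂y_i)(Y)|] < ∞ for each i. Then E[εᵀ μ̂(Y)] = σ² E[Σ_{i=1}^N (∂μ̂_i/∂y_i)(Y)]. -/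
open MeasureTheory ProbabilityTheory
open scoped NNReal

/-!
Coordinatewise, Fubini reduces the identity to one dimension, where it is Gaussian integration
by parts: the density `φ` of `N(m, v)` satisfies `v φ' = -(x - m) φ`, so
`∫ (x - m) g φ = -v ∫ g φ' = v ∫ g' φ`. There are no boundary terms because `g φ` is integrable:
it is continuous, and dominated by `(x - m) g φ` away from `m`.
-/

lemma hasDerivAt_gaussianPDFReal (m : ℝ) (v : ℝ≥0) (x : ℝ) :
    HasDerivAt (gaussianPDFReal m v) (-((x - m) / v) * gaussianPDFReal m v x) x := by
  have hexponent : HasDerivAt (fun x : ℝ => -(x - m) ^ 2 / (2 * v)) (-((x - m) / v)) x := by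
    refine ((((hasDerivAt_id x).sub_const m).fun_pow 2).fun_neg.div_const
      (2 * (v : ℝ))).congr_deriv ?_
    simp only [id, Nat.cast_ofNat, mul_one, pow_one, Nat.add_one_sub_one]
    rw [neg_div, mul_div_mul_left _ _ (two_ne_zero' ℝ)]
  rw [gaussianPDFReal_def]
  exact (hexponent.exp.const_mul _).congr_deriv (by ring)

section Gaussian

variable {m : ℝ} {v : ℝ≥0}

lemma integrable_gaussianReal_iff {E : Type*} [NormedAddCommGroup E] [NormedSpace ℝ E]
    {f : ℝ → E} (hv : v ≠ 0) :
    Integrable f (gaussianReal m v) ↔ Integrable (fun x => gaussianPDFReal m v x • f x) := by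
  simp only [gaussianReal, hv, if_false, ← toReal_gaussianPDF]
  exact integrable_withDensity_iff_integrable_smul' (measurable_gaussianPDF m v)
    (.of_forall fun _ => gaussianPDF_lt_top)

lemma Continuous.integrable_of_integrable_sub_smul {E : Type*} [NormedAddCommGroup E]
    [NormedSpace ℝ E] {h : ℝ → E} (hh : Continuous h)
    (hint : Integrable (fun x => (x - m) • h x)) : Integrable h := by
  rw [← integrableOn_univ, ← Set.union_compl_self (Set.Icc (m - 1) (m + 1))]
  refine (hh.continuousOn.integrableOn_Icc).union ?_
  refine hint.restrict.mono hh.aestronglyMeasurable.restrict ?_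
  refine ae_restrict_of_forall_mem (measurableSet_Icc.compl) fun x hx => ?_
  have : 1 ≤ |x - m| := by
    contrapose! hx
    rw [abs_lt] at hx
    exact Set.notMem_compl_iff.2 ⟨by linarith, by linarith⟩
  rw [norm_smul, Real.norm_eq_abs]
  exact le_mul_of_one_le_left (norm_nonneg _) this

theorem integral_sub_mul_gaussianReal {g g' : ℝ → ℝ} (hg : ∀ x, HasDerivAt g (g' x) x)
    (h1 : Integrable (fun x => (x - m) * g x) (gaussianReal m v))
    (h2 : Integrable g' (gaussianReal m v)) :
    ∫ x, (x - m) * g x ∂gaussianReal m v = v * ∫ x, g' x ∂gaussianReal m v := by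
  rcases eq_or_ne v 0 with rfl | hv
  · simp [gaussianReal_zero_var]
  rw [integrable_gaussianReal_iff hv] at h1 h2
  simp only [integral_gaussianReal_eq_integral_smul hv, smul_eq_mul] at h1 h2 ⊢
  set φ := gaussianPDFReal m v
  have hgφ : Integrable (fun x => g x * φ x) := by
    have hcont : Continuous fun x => g x * φ x := continuous_iff_continuousAt.2 fun x =>
      ((hg x).mul (hasDerivAt_gaussianPDFReal m v x)).continuousAt
    refine hcont.integrable_of_integrable_sub_smul (m := m) ?_
    exact h1.congr (.of_forall fun x => by simp only [smul_eq_mul]; ring)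
  have hibp : ∫ x, g x * (-((x - m) / v) * φ x) = -∫ x, g' x * φ x :=
    integral_mul_deriv_eq_deriv_mul_of_integrable (fun x _ => hg x)
      (fun x _ => hasDerivAt_gaussianPDFReal m v x)
      ((h1.const_mul (-(v : ℝ)⁻¹)).congr (.of_forall fun x => by simp only [Pi.mul_apply]; ring))
      (h2.congr (.of_forall fun x => by simp only [Pi.mul_apply]; ring)) hgφ
  have hv' : (v : ℝ) ≠ 0 := by exact_mod_cast hv
  calc ∫ x, φ x * ((x - m) * g x)
      = -v * ∫ x, g x * (-((x - m) / v) * φ x) := by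
        rw [← integral_const_mul]
        refine integral_congr_ae (.of_forall fun x => ?_)
        field_simp
    _ = v * ∫ x, φ x * g' x := by
        rw [hibp]; simp only [mul_comm (g' _)]; ring

end Gaussian

section InsertNth

variable {n : ℕ} {α : Fin (n + 1) → Type*} [∀ j, MeasurableSpace (α j)]
  (μ : ∀ j, Measure (α j)) [∀ j, SigmaFinite (μ j)] (i : Fin (n + 1))
  {E : Type*} [NormedAddCommGroup E] {F : (∀ j, α j) → E}

lemma integrable_comp_insertNth_iff :
    Integrable (fun z : α i × _ => F (i.insertNth z.1 z.2))
        ((μ i).prod (Measure.pi fun j => μ (i.succAbove j))) ↔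
      Integrable F (Measure.pi μ) :=
  (measurePreserving_piFinSuccAbove μ i).symm.integrable_comp_emb
    (MeasurableEquiv.measurableEmbedding _)

lemma MeasureTheory.Integrable.ae_integrable_insertNth (hF : Integrable F (Measure.pi μ)) :
    ∀ᵐ b ∂Measure.pi (fun j => μ (i.succAbove j)),
      Integrable (fun t => F (i.insertNth t b)) (μ i) :=
  ((integrable_comp_insertNth_iff μ i).2 hF).prod_left_ae

lemma integral_pi_eq_integral_integral_insertNth [NormedSpace ℝ E]
    (hF : Integrable F (Measure.pi μ)) :
    ∫ y, F y ∂Measure.pi μ =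
      ∫ b, ∫ t, F (i.insertNth t b) ∂μ i ∂Measure.pi fun j => μ (i.succAbove j) := by
  rw [← (measurePreserving_piFinSuccAbove μ i).symm.integral_comp']
  exact integral_prod_symm _ ((integrable_comp_insertNth_iff μ i).2 hF)

end InsertNth

theorem integral_sub_mul_pi_gaussianReal {N : ℕ} (μ : Fin N → ℝ) (v : ℝ≥0)
    {g : (Fin N → ℝ) → ℝ} {g' : (Fin N → ℝ) → (Fin N → ℝ) →L[ℝ] ℝ}
    (hg : ∀ y, HasFDerivAt g (g' y) y) (i : Fin N)
    (h1 : Integrable (fun y => (y i - μ i) * g y) (Measure.pi fun j => gaussianReal (μ j) v))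
    (h2 : Integrable (fun y => g' y (Pi.single i 1))
      (Measure.pi fun j => gaussianReal (μ j) v)) :
    ∫ y, (y i - μ i) * g y ∂Measure.pi (fun j => gaussianReal (μ j) v) =
      v * ∫ y, g' y (Pi.single i 1) ∂Measure.pi (fun j => gaussianReal (μ j) v) := by
  obtain ⟨n, rfl⟩ := Nat.exists_eq_succ_of_ne_zero i.pos.ne'
  rw [integral_pi_eq_integral_integral_insertNth _ i h1,
    integral_pi_eq_integral_integral_insertNth _ i h2, ← integral_const_mul]
  refine integral_congr_ae ?_
  filter_upwards [h1.ae_integrable_insertNth _ i, h2.ae_integrable_insertNth _ i]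
    with b hb1 hb2
  have hline : ∀ t, HasDerivAt (fun t => g (i.insertNth t b))
      (g' (i.insertNth t b) (Pi.single i 1)) t := fun t => by
    simpa only [Function.comp_def, Fin.update_insertNth] using
      (hg _).comp_hasDerivAt t (hasDerivAt_update (i.insertNth 0 b) i t)
  simp only [Fin.insertNth_apply_same] at hb1 ⊢
  exact integral_sub_mul_gaussianReal hline hb1 hb2

theorem stein_identity_general
    (N : ℕ) (μ : Fin N → ℝ) (v : ℝ≥0)
    (f : (Fin N → ℝ) → (Fin N → ℝ)) (hf : ContDiff ℝ 1 f)
    (hint1 : ∀ i, Integrable (fun y => (y i - μ i) * f y i)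
      (Measure.pi fun i => gaussianReal (μ i) v))
    (hint2 : ∀ i, Integrable (fun y => fderiv ℝ f y (Pi.single i 1) i)
      (Measure.pi fun i => gaussianReal (μ i) v)) :
    ∫ y, ∑ i, (y i - μ i) * f y i ∂(Measure.pi fun i => gaussianReal (μ i) v)
      = (v : ℝ) *
        ∫ y, ∑ i, fderiv ℝ f y (Pi.single i 1) i
          ∂(Measure.pi fun i => gaussianReal (μ i) v) := by
  have hcoord (i : Fin N) (y : Fin N → ℝ) :
      HasFDerivAt (fun y => f y i) ((ContinuousLinearMap.proj i).comp (fderiv ℝ f y)) y :=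
    hasFDerivAt_pi'.1 (hf.differentiable one_ne_zero y).hasFDerivAt i
  rw [integral_finsetSum _ fun i _ => hint1 i, integral_finsetSum _ fun i _ => hint2 i,
    Finset.mul_sum]
  exact Finset.sum_congr rfl fun i _ =>
    integral_sub_mul_pi_gaussianReal μ v (hcoord i) i (hint1 i) (hint2 i)

/-- Stein's identity: for `Y ~ ∏ N(μ_i, σ²)` and a continuously differentiable
estimator `μ̂`, `E[εᵀ μ̂(Y)] = σ² E[∑_i ∂μ̂_i/∂y_i (Y)]`, where `ε = Y - μ`. -/
theorem stein_identity
    (N : ℕ) (hN : 0 < N) (μ : Fin N → ℝ) (v : ℝ≥0) (hv : 0 < v)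
    (f : (Fin N → ℝ) → (Fin N → ℝ)) (hf : ContDiff ℝ 1 f)
    (hint1 : ∀ i, Integrable (fun y => (y i - μ i) * f y i)
      (Measure.pi fun i => gaussianReal (μ i) v))
    (hint2 : ∀ i, Integrable (fun y => fderiv ℝ f y (Pi.single i 1) i)
      (Measure.pi fun i => gaussianReal (μ i) v)) :
    ∫ y, ∑ i, (y i - μ i) * f y i ∂(Measure.pi fun i => gaussianReal (μ i) v)
      = (v : ℝ) *
        ∫ y, ∑ i, fderiv ℝ f y (Pi.single i 1) i
          ∂(Measure.pi fun i => gaussianReal (μ i) v) :=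
  stein_identity_general N μ v f hf hint1 hint2
end
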